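/- Any separable verification operator Ω on ℂ^d ⊗ ℂ^d with ΩΦ = Φ and 0 ≤ Ω ≤ I satisfies tr(Ω) ≥ d, and hence its second largest eigenvalue satisfies β(Ω) ≥ (d−1)/(d²−1) = 1/(d+1); equivalently the spectral gap ν(Ω) = 1 − β(Ω) is at most d/(d+1). -/

import Mathlib

open Matrix
open scoped ComplexOrder

/-- The conjugate-basis test projector P(B) = Σ_{ψ∈B} |ψ⟩⟨ψ| ⊗ |ψ*⟩⟨ψ*| on ℂ^d ⊗ ℂ^d. -/
noncomputable def projCB (d : ℕ) (B : Fin d → Fin d → ℂ) :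
    Matrix (Fin d × Fin d) (Fin d × Fin d) ℂ :=
  ∑ i, Matrix.kroneckerMap (· * ·) (Matrix.vecMulVec (B i) (star (B i)))
      (Matrix.vecMulVec (star (B i)) (B i))

/-- The maximally entangled state |Φ⟩ = d^{-1/2} Σ_j |j⟩⊗|j⟩ as a vector on Fin d × Fin d. -/
noncomputable def PhiVec (d : ℕ) : Fin d × Fin d → ℂ :=
  fun p => if p.1 = p.2 then ((Real.sqrt d : ℝ) : ℂ)⁻¹ else 0

/-- The rank-one projector |Φ⟩⟨Φ|. -/
noncomputable def PhiMat (d : ℕ) : Matrix (Fin d × Fin d) (Fin d × Fin d) ℂ :=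
  Matrix.vecMulVec (PhiVec d) (star (PhiVec d))

/-- B is an orthonormal basis of ℂ^d. -/
def IsONB (d : ℕ) (B : Fin d → Fin d → ℂ) : Prop :=
  ∀ i j, star (B i) ⬝ᵥ B j = if i = j then 1 else 0

/-!
Write `Ω = ∑ⱼ cⱼ |uⱼ ⊗ vⱼ⟩⟨uⱼ ⊗ vⱼ|`. Then `ΩΦ = Φ` gives `1 = ⟨Φ|Ω|Φ⟩ = ∑ⱼ cⱼ |⟨Φ|uⱼ ⊗ vⱼ⟩|²`,
while Cauchy–Schwarz gives `d |⟨Φ|u ⊗ v⟩|² ≤ ‖u‖² ‖v‖² = tr |u ⊗ v⟩⟨u ⊗ v|`; summing, `tr Ω ≥ d`.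

For the eigenvalue bound, compress by the projector `Q = 1 - |Φ⟩⟨Φ|`: `tr (QΩQ) = tr Ω - 1 ≥ d - 1`
and `tr Q = d² - 1`, so some column of `Q`, a vector orthogonal to `Φ`, has Rayleigh quotient at
least the average `(d - 1) / (d² - 1) = 1 / (d + 1)`.
-/

theorem norm_sum_mul_sq_le {ι R : Type*} [Fintype ι] [NormedRing R] (u v : ι → R) :
    ‖∑ a, u a * v a‖ ^ 2 ≤ (∑ a, ‖u a‖ ^ 2) * ∑ a, ‖v a‖ ^ 2 := by
  have htri : ‖∑ a, u a * v a‖ ≤ ∑ a, ‖u a‖ * ‖v a‖ :=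
    (norm_sum_le _ _).trans (Finset.sum_le_sum fun a _ => norm_mul_le _ _)
  exact (pow_le_pow_left₀ (norm_nonneg _) htri 2).trans
    (Finset.sum_mul_sq_le_sq_mul_sq _ _ _)

theorem kroneckerMap_mul_vecMulVec {α l m n p : Type*} [CommSemiring α]
    (a : l → α) (b : m → α) (c : n → α) (e : p → α) :
    kroneckerMap (· * ·) (vecMulVec a b) (vecMulVec c e) =
      vecMulVec (fun i => a i.1 * c i.2) (fun j => b j.1 * e j.2) := by
  ext i j
  simp only [kroneckerMap_apply, vecMulVec_apply]
  ring

section RankOne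

variable {n : Type*} [Fintype n]

theorem star_dotProduct_vecMulVec_star_mulVec (ψ w : n → ℂ) :
    star ψ ⬝ᵥ (vecMulVec w (star w) *ᵥ ψ) = ((‖star ψ ⬝ᵥ w‖ ^ 2 : ℝ) : ℂ) := by
  rw [vecMulVec_mulVec, op_smul_eq_smul, dotProduct_smul, smul_eq_mul,
    star_dotProduct, Complex.ofReal_pow, ← Complex.conj_mul']
  rfl

theorem re_trace_vecMulVec_star (w : n → ℂ) :
    (vecMulVec w (star w)).trace.re = ∑ i, ‖w i‖ ^ 2 := by
  simp [trace_vecMulVec, dotProduct, Complex.re_sum, Complex.mul_conj', ← Complex.ofReal_pow]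

theorem mul_re_star_dotProduct_mulVec_le_re_trace {ι : Type*} [Fintype ι] (K : ℝ)
    (ψ : n → ℂ) (c : ι → ℝ) (hc : ∀ j, 0 ≤ c j) (w : ι → n → ℂ)
    (hw : ∀ j, K * ‖star ψ ⬝ᵥ w j‖ ^ 2 ≤ ∑ i, ‖w j i‖ ^ 2) :
    K * (star ψ ⬝ᵥ ((∑ j, (c j : ℂ) • vecMulVec (w j) (star (w j))) *ᵥ ψ)).re ≤
      (∑ j, (c j : ℂ) • vecMulVec (w j) (star (w j))).trace.re := by
  simp only [sum_mulVec, dotProduct_sum, smul_mulVec, dotProduct_smul, trace_sum, trace_smul,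
    Complex.re_sum, Finset.mul_sum, smul_eq_mul, Complex.re_ofReal_mul,
    star_dotProduct_vecMulVec_star_mulVec, Complex.ofReal_re, re_trace_vecMulVec_star]
  exact Finset.sum_le_sum fun j _ => by
    rw [mul_left_comm, ← Finset.mul_sum]; exact mul_le_mul_of_nonneg_left (hw j) (hc j)

end RankOne

section MaximallyEntangled

variable {d : ℕ}

theorem star_PhiVec : star (PhiVec d) = PhiVec d := by
  funext p
  simp [PhiVec, apply_ite star, Complex.conj_ofReal]

theorem star_PhiVec_dotProduct (w : Fin d × Fin d → ℂ) :
    star (PhiVec d) ⬝ᵥ w = ((√d : ℝ) : ℂ)⁻¹ * ∑ a, w (a, a) := by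
  rw [star_PhiVec]
  simp [dotProduct, PhiVec, Fintype.sum_prod_type, ite_mul, Finset.mul_sum]

theorem star_PhiVec_dotProduct_self (hd : 0 < d) : star (PhiVec d) ⬝ᵥ PhiVec d = 1 := by
  have hsqrt : ((√d : ℝ) : ℂ) ≠ 0 := by exact_mod_cast (Real.sqrt_pos.2 (by positivity)).ne'
  have hsq : ((√d : ℝ) : ℂ) ^ 2 = d := by
    rw [← Complex.ofReal_pow, Real.sq_sqrt d.cast_nonneg, Complex.ofReal_natCast]
  simp only [star_PhiVec_dotProduct, PhiVec, if_true, Finset.sum_const, Finset.card_univ,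
    Fintype.card_fin, nsmul_eq_mul]
  field_simp
  exact hsq.symm

theorem mul_norm_star_PhiVec_dotProduct_tensor_sq_le (u v : Fin d → ℂ) :
    d * ‖star (PhiVec d) ⬝ᵥ fun p => u p.1 * v p.2‖ ^ 2 ≤
      ∑ p : Fin d × Fin d, ‖u p.1 * v p.2‖ ^ 2 := by
  have hsq : ‖((√d : ℝ) : ℂ)⁻¹‖ ^ 2 = (d : ℝ)⁻¹ := by
    rw [norm_inv, Complex.norm_real, Real.norm_of_nonneg (Real.sqrt_nonneg _), inv_pow,
      Real.sq_sqrt d.cast_nonneg]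
  have hsum : ∑ p : Fin d × Fin d, ‖u p.1 * v p.2‖ ^ 2 = (∑ a, ‖u a‖ ^ 2) * ∑ a, ‖v a‖ ^ 2 := by
    simp [Fintype.sum_prod_type, mul_pow, Finset.sum_mul_sum]
  rw [star_PhiVec_dotProduct, norm_mul, mul_pow, hsq, hsum, ← mul_assoc]
  calc (d : ℝ) * (d : ℝ)⁻¹ * ‖∑ a, u a * v a‖ ^ 2 ≤ 1 * ‖∑ a, u a * v a‖ ^ 2 := by
        gcongr; exact mul_inv_le_one
    _ ≤ (∑ a, ‖u a‖ ^ 2) * ∑ a, ‖v a‖ ^ 2 := by rw [one_mul]; exact norm_sum_mul_sq_le u v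

theorem le_re_trace_of_mulVec_PhiVec_eq (hd : 0 < d)
    {Ω : Matrix (Fin d × Fin d) (Fin d × Fin d) ℂ} (hfix : Ω *ᵥ PhiVec d = PhiVec d)
    {m : ℕ} {c : Fin m → ℝ} (hc : ∀ j, 0 ≤ c j)
    {φ χ : Fin m → Fin d → ℂ}
    (hΩsep : Ω = ∑ j, (c j : ℂ) •
        Matrix.kroneckerMap (· * ·) (Matrix.vecMulVec (φ j) (star (φ j)))
          (Matrix.vecMulVec (χ j) (star (χ j)))) :
    (d : ℝ) ≤ Ω.trace.re := by
  set w : Fin m → Fin d × Fin d → ℂ := fun j p => φ j p.1 * χ j p.2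
  have hΩ : Ω = ∑ j, (c j : ℂ) • vecMulVec (w j) (star (w j)) := by
    rw [hΩsep]
    congr! 2 with j
    rw [kroneckerMap_mul_vecMulVec]
    congr 1
    funext p
    simp [w]
  have key := mul_re_star_dotProduct_mulVec_le_re_trace (d : ℝ) (PhiVec d) c hc w
    fun j => mul_norm_star_PhiVec_dotProduct_tensor_sq_le (φ j) (χ j)
  rwa [← hΩ, hfix, star_PhiVec_dotProduct_self hd, Complex.one_re, mul_one] at key

end MaximallyEntangled

section Rayleigh

variable {n : Type*} [Fintype n]

theorem coe_re_star_dotProduct_self (y : n → ℂ) : ((star y ⬝ᵥ y).re : ℂ) = star y ⬝ᵥ y :=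
  Complex.ext rfl (Complex.nonneg_iff.1 (dotProduct_star_self_nonneg y)).2

theorem re_star_dotProduct_self_pos {y : n → ℂ} (hy : y ≠ 0) : 0 < (star y ⬝ᵥ y).re :=
  (Complex.pos_iff.1 (dotProduct_star_self_pos_iff.2 hy)).1

theorem exists_unit_mulVec_eq_self_of_ne_zero (A Q : Matrix n n ℂ) {y : n → ℂ} (hy : y ≠ 0)
    (hQy : Q *ᵥ y = y) :
    ∃ x, star x ⬝ᵥ x = 1 ∧ Q *ᵥ x = x ∧
      (star x ⬝ᵥ (A *ᵥ x)).re = (star y ⬝ᵥ (A *ᵥ y)).re / (star y ⬝ᵥ y).re := by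
  set r := (star y ⬝ᵥ y).re
  have hr : 0 < r := re_star_dotProduct_self_pos hy
  set t : ℝ := (√r)⁻¹
  have ht : t * t * r = 1 := by
    rw [← pow_two, inv_pow, Real.sq_sqrt hr.le, inv_mul_cancel₀ hr.ne']
  have hstar : star ((t : ℂ) • y) = (t : ℂ) • star y := by
    rw [star_smul, Complex.star_def, Complex.conj_ofReal]
  refine ⟨(t : ℂ) • y, ?_, by rw [mulVec_smul, hQy], ?_⟩
  · rw [hstar, smul_dotProduct, dotProduct_smul, ← coe_re_star_dotProduct_self, smul_eq_mul,
      smul_eq_mul, ← mul_assoc]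
    exact_mod_cast ht
  · rw [hstar, mulVec_smul, smul_dotProduct, dotProduct_smul, smul_eq_mul, smul_eq_mul,
      ← mul_assoc, ← Complex.ofReal_mul, Complex.re_ofReal_mul, eq_div_iff hr.ne', mul_comm,
      ← mul_assoc, mul_comm r, ht, one_mul]

theorem exists_unit_mulVec_eq_self_le_re_star_dotProduct {Q : Matrix n n ℂ} (hQ : Q.IsHermitian)
    (hQQ : Q * Q = Q) (A : Matrix n n ℂ) (hpos : 0 < Q.trace.re) :
    ∃ x, star x ⬝ᵥ x = 1 ∧ Q *ᵥ x = x ∧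
      (Q * A * Q).trace.re / Q.trace.re ≤ (star x ⬝ᵥ (A *ᵥ x)).re := by
  classical
  -- The columns `y p` of `Q` lie in its range, and their Rayleigh quotients average to the bound.
  set y : n → n → ℂ := fun p i => Q i p
  have hstar : ∀ p, star (y p) = Q p := fun p => funext fun i => hQ.apply p i
  have hQy : ∀ p, Q *ᵥ y p = y p := fun p => funext fun i => by
    change _ = Q i p
    conv_rhs => rw [← hQQ]
    rfl
  have hyy : ∀ p, star (y p) ⬝ᵥ y p = Q p p := fun p => by
    rw [hstar, ← congrFun (congrFun hQQ p) p, mul_apply']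
  have hyA : ∀ p, star (y p) ⬝ᵥ (A *ᵥ y p) = (Q * A * Q) p p := fun p => by
    rw [hstar, mul_mul_apply]; rfl
  set s := Finset.univ.filter fun p => y p ≠ 0
  have hsum : ∀ f : n → ℂ, (∀ p, y p = 0 → f p = 0) → ∑ p ∈ s, (f p).re = (∑ p, f p).re :=
    fun f hf => by
      rw [Complex.re_sum]
      exact Finset.sum_filter_of_ne fun p _ hp h0 => hp (by rw [hf p h0, Complex.zero_re])
  have hsQ : ∑ p ∈ s, (Q p p).re = Q.trace.re :=
    hsum (fun p => Q p p) fun p h0 => by rw [← hyy, h0, dotProduct_zero]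
  have hsA : ∑ p ∈ s, ((Q * A * Q) p p).re = (Q * A * Q).trace.re :=
    hsum (fun p => (Q * A * Q) p p) fun p h0 => by rw [← hyA, h0, mulVec_zero, dotProduct_zero]
  have hs : s.Nonempty := Finset.nonempty_of_sum_ne_zero (hsQ.trans_ne hpos.ne')
  obtain ⟨p, hp, hle⟩ := Finset.exists_le_of_sum_le hs (f := fun p =>
    (Q * A * Q).trace.re / Q.trace.re * (Q p p).re) (g := fun p => ((Q * A * Q) p p).re) (by
      rw [← Finset.mul_sum, hsQ, hsA, div_mul_cancel₀ _ hpos.ne'])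
  have hp0 : y p ≠ 0 := (Finset.mem_filter.1 hp).2
  have hr : 0 < (Q p p).re := hyy p ▸ re_star_dotProduct_self_pos hp0
  obtain ⟨x, hx1, hQx, hxA⟩ := exists_unit_mulVec_eq_self_of_ne_zero A Q hp0 (hQy p)
  refine ⟨x, hx1, hQx, ?_⟩
  rw [hxA, hyA, hyy, le_div_iff₀ hr]
  exact hle

-- For Hermitian `A` with `A ψ = ψ` and `A ≤ 1`, the greatest element is the paper's `β(A)`.
def orthRayleighValues (A : Matrix n n ℂ) (ψ : n → ℂ) : Set ℝ :=
  {r | ∃ x : n → ℂ, star x ⬝ᵥ x = 1 ∧ star ψ ⬝ᵥ x = 0 ∧ (star x ⬝ᵥ (A *ᵥ x)).re = r}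

end Rayleigh

section OrthogonalComplement

variable {n : Type*} [Fintype n] [DecidableEq n] {ψ : n → ℂ}

theorem isHermitian_one_sub_vecMulVec (ψ : n → ℂ) : (1 - vecMulVec ψ (star ψ)).IsHermitian :=
  isHermitian_one.sub (posSemidef_vecMulVec_self_star ψ).isHermitian

theorem one_sub_vecMulVec_mul_self (hψ : star ψ ⬝ᵥ ψ = 1) :
    (1 - vecMulVec ψ (star ψ)) * (1 - vecMulVec ψ (star ψ)) = 1 - vecMulVec ψ (star ψ) := by
  have hP : vecMulVec ψ (star ψ) * vecMulVec ψ (star ψ) = vecMulVec ψ (star ψ) := by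
    rw [vecMulVec_mul_vecMulVec, hψ, one_smul]
  simp only [sub_mul, mul_sub, one_mul, mul_one, hP, sub_self, sub_zero]

theorem one_sub_vecMulVec_mulVec (ψ x : n → ℂ) :
    (1 - vecMulVec ψ (star ψ)) *ᵥ x = x - (star ψ ⬝ᵥ x) • ψ := by
  rw [sub_mulVec, one_mulVec, vecMulVec_mulVec, op_smul_eq_smul]

theorem trace_one_sub_vecMulVec (hψ : star ψ ⬝ᵥ ψ = 1) :
    (1 - vecMulVec ψ (star ψ)).trace = Fintype.card n - 1 := by
  rw [trace_sub, trace_one, trace_vecMulVec, dotProduct_comm, hψ]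

theorem trace_one_sub_vecMulVec_mul_mul (hψ : star ψ ⬝ᵥ ψ = 1) (A : Matrix n n ℂ) :
    ((1 - vecMulVec ψ (star ψ)) * A * (1 - vecMulVec ψ (star ψ))).trace =
      A.trace - star ψ ⬝ᵥ (A *ᵥ ψ) := by
  rw [trace_mul_cycle, one_sub_vecMulVec_mul_self hψ, sub_mul, one_mul, vecMulVec_mul, trace_sub,
    trace_vecMulVec, dotProduct_comm, ← dotProduct_mulVec]

theorem one_lt_card_of_orthRayleighValues_nonempty (hψ : star ψ ⬝ᵥ ψ = 1) {A : Matrix n n ℂ}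
    (h : (orthRayleighValues A ψ).Nonempty) : 1 < Fintype.card n := by
  obtain ⟨-, x, hx, hxψ, -⟩ := h
  have hx0 : x ≠ 0 := by rintro rfl; simp at hx
  have hQx : (1 - vecMulVec ψ (star ψ)) *ᵥ x = x := by
    rw [one_sub_vecMulVec_mulVec, hxψ, zero_smul, sub_zero]
  have hQ : (1 - vecMulVec ψ (star ψ)).PosSemidef := by
    have := posSemidef_conjTranspose_mul_self (1 - vecMulVec ψ (star ψ))
    rwa [(isHermitian_one_sub_vecMulVec ψ).eq, one_sub_vecMulVec_mul_self hψ] at this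
  have htr : (Fintype.card n : ℂ) - 1 ≠ 0 := by
    rw [← trace_one_sub_vecMulVec hψ, Ne, hQ.trace_eq_zero_iff]
    rintro hQ0
    rw [hQ0, zero_mulVec] at hQx
    exact hx0 hQx.symm
  obtain ⟨i, -⟩ := Function.ne_iff.1 hx0
  have hcard : 0 < Fintype.card n := Fintype.card_pos_iff.2 ⟨i⟩
  have : Fintype.card n ≠ 1 := by rintro h1; simp [h1] at htr
  omega

theorem le_of_isGreatest_orthRayleighValues (hψ : star ψ ⬝ᵥ ψ = 1) {A : Matrix n n ℂ} {β : ℝ}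
    (hβ : IsGreatest (orthRayleighValues A ψ) β) :
    (A.trace.re - (star ψ ⬝ᵥ (A *ᵥ ψ)).re) / (Fintype.card n - 1) ≤ β := by
  have htrQ : (1 - vecMulVec ψ (star ψ)).trace.re = Fintype.card n - 1 := by
    rw [trace_one_sub_vecMulVec hψ]; simp
  have hpos : 0 < (1 - vecMulVec ψ (star ψ)).trace.re := by
    rw [htrQ, sub_pos, Nat.one_lt_cast]
    exact one_lt_card_of_orthRayleighValues_nonempty hψ ⟨β, hβ.1⟩
  obtain ⟨x, hx, hQx, hle⟩ := exists_unit_mulVec_eq_self_le_re_star_dotProduct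
    (isHermitian_one_sub_vecMulVec ψ) (one_sub_vecMulVec_mul_self hψ) A hpos
  have hxψ : star ψ ⬝ᵥ x = 0 := by
    rw [one_sub_vecMulVec_mulVec, sub_eq_self, smul_eq_zero] at hQx
    exact hQx.resolve_right fun h0 => by simp [h0] at hψ
  rw [trace_one_sub_vecMulVec_mul_mul hψ, htrQ, Complex.sub_re] at hle
  exact hle.trans (hβ.2 ⟨x, hx, hxψ, rfl⟩)

end OrthogonalComplement

theorem stmt13_general {d : ℕ} (hd : 0 < d)
    (Ω : Matrix (Fin d × Fin d) (Fin d × Fin d) ℂ)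
    (hfix : Ω *ᵥ PhiVec d = PhiVec d)
    (m : ℕ) (c : Fin m → ℝ) (hc : ∀ j, 0 ≤ c j)
    (φ χ : Fin m → Fin d → ℂ)
    (hΩsep : Ω = ∑ j, (c j : ℂ) •
        Matrix.kroneckerMap (· * ·) (Matrix.vecMulVec (φ j) (star (φ j)))
          (Matrix.vecMulVec (χ j) (star (χ j))))
    (β : ℝ)
    (hβ : IsGreatest {r : ℝ | ∃ x : Fin d × Fin d → ℂ, star x ⬝ᵥ x = 1 ∧
        star (PhiVec d) ⬝ᵥ x = 0 ∧ (star x ⬝ᵥ (Ω *ᵥ x)).re = r} β) :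
    (d : ℝ) ≤ Ω.trace.re ∧ 1 / ((d : ℝ) + 1) ≤ β ∧ 1 - β ≤ (d : ℝ) / ((d : ℝ) + 1) := by
  have htr : (d : ℝ) ≤ Ω.trace.re := le_re_trace_of_mulVec_PhiVec_eq hd hfix hc hΩsep
  have hΦ := star_PhiVec_dotProduct_self hd
  have hcard := one_lt_card_of_orthRayleighValues_nonempty hΦ ⟨β, hβ.1⟩
  have hβle := le_of_isGreatest_orthRayleighValues hΦ hβ
  simp only [hfix, hΦ, Complex.one_re, Fintype.card_prod, Fintype.card_fin, Nat.cast_mul] at hβle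
  rw [Fintype.card_prod, Fintype.card_fin] at hcard
  have hcard' : (1 : ℝ) < d * d := by exact_mod_cast hcard
  have hβ' : 1 / ((d : ℝ) + 1) ≤ β := by
    refine le_trans ?_ hβle
    rw [div_le_div_iff₀ (by positivity) (by linarith)]
    nlinarith
  refine ⟨htr, hβ', ?_⟩
  have hsplit : (d : ℝ) / (d + 1) = 1 - 1 / (d + 1) := by field_simp; ring
  linarith

/-- any separable verification operator Ω for |Φ⟩ (0 ≤ Ω ≤ I, ΩΦ = Φ,
Ω a nonnegative combination of pure product operators) satisfies tr(Ω) ≥ d, and its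
second largest eigenvalue β(Ω) satisfies β(Ω) ≥ 1/(d+1), i.e. ν(Ω) = 1−β(Ω) ≤ d/(d+1). -/
theorem stmt13 {d : ℕ} (hd : 0 < d)
    (Ω : Matrix (Fin d × Fin d) (Fin d × Fin d) ℂ)
    (hΩpos : Ω.PosSemidef) (hΩle : (1 - Ω).PosSemidef)
    (hfix : Ω *ᵥ PhiVec d = PhiVec d)
    (m : ℕ) (c : Fin m → ℝ) (hc : ∀ j, 0 ≤ c j)
    (φ χ : Fin m → Fin d → ℂ)
    (hΩsep : Ω = ∑ j, (c j : ℂ) •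
        Matrix.kroneckerMap (· * ·) (Matrix.vecMulVec (φ j) (star (φ j)))
          (Matrix.vecMulVec (χ j) (star (χ j))))
    (β : ℝ)
    (hβ : IsGreatest {r : ℝ | ∃ x : Fin d × Fin d → ℂ, star x ⬝ᵥ x = 1 ∧
        star (PhiVec d) ⬝ᵥ x = 0 ∧ (star x ⬝ᵥ (Ω *ᵥ x)).re = r} β) :
    (d : ℝ) ≤ Ω.trace.re ∧ 1 / ((d : ℝ) + 1) ≤ β ∧ 1 - β ≤ (d : ℝ) / ((d : ℝ) + 1) :=
  stmt13_general hd Ω hfix m c hc φ χ hΩsep β hβ
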